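/- arXiv:1701.06689 — 8 statements merged into one kernel-verified Lean document; each statement's English description precedes it below -/
import Mathlib

section
/- Wallis's bounds: for every natural number n ≥ 1, the quantity θ_n := 2^{4n} · (n!)^4 / (π · n · ((2n)!)²) satisfies √(1 + 1/(2n)) < θ_n < √(1 + 1/(2n-1)). -/
/-!
`θ_n = (2/π) W_n (1 + 1/(2n))`, where `W_n` is Wallis's product, so `θ_n → 1`. Along the
recursion `θ_{n+1} = θ_n · 4n(n+1)/(2n+1)²` the sequence `θ_n² / (1 + 1/(2n))` strictly
decreases and `θ_n² / (1 + 1/(2n-1))` strictly increases; both tend to `1`, so the first stays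
above `1` and the second below.
-/

open Real Filter Topology

theorem lt_of_tendsto_of_succ_lt {α : Type*} [TopologicalSpace α] [Preorder α]
    [OrderClosedTopology α] {u : ℕ → α} {L : α} {n : ℕ} (hu : Tendsto u atTop (𝓝 L))
    (h : ∀ m ≥ n, u (m + 1) < u m) : L < u n := by
  have hanti : StrictAnti fun k => u (k + n) :=
    strictAnti_nat_of_succ_lt fun k => by
      simpa only [Nat.add_right_comm] using h (k + n) (by omega)
  have hlim : Tendsto (fun k => u (k + n)) atTop (𝓝 L) := (tendsto_add_atTop_iff_nat n).2 hu
  simpa using (hanti.antitone.le_of_tendsto hlim 1).trans_lt (hanti Nat.zero_lt_one)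

theorem lt_of_tendsto_of_lt_succ {α : Type*} [TopologicalSpace α] [Preorder α]
    [OrderClosedTopology α] {u : ℕ → α} {L : α} {n : ℕ} (hu : Tendsto u atTop (𝓝 L))
    (h : ∀ m ≥ n, u m < u (m + 1)) : u n < L :=
  lt_of_tendsto_of_succ_lt (α := αᵒᵈ) hu h

theorem tendsto_one_add_one_div_atTop {f : ℕ → ℝ} (hf : Tendsto f atTop atTop) :
    Tendsto (fun n => 1 + 1 / f n) atTop (𝓝 1) := by
  simpa only [one_div, Pi.inv_apply, add_zero] using tendsto_const_nhds.add hf.inv_tendsto_atTop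

noncomputable def wallisTheta (n : ℕ) : ℝ :=
  2 ^ (4 * n) * (n.factorial : ℝ) ^ 4 / (π * n * ((2 * n).factorial : ℝ) ^ 2)

section

variable {n : ℕ}

theorem wallisTheta_pos (hn : 1 ≤ n) : 0 < wallisTheta n := by
  have := pi_pos
  unfold wallisTheta
  positivity

theorem wallisTheta_eq_W (hn : 1 ≤ n) :
    wallisTheta n = 2 / π * Wallis.W n * (1 + 1 / (2 * n)) := by
  rw [Wallis.W_eq_factorial_ratio, wallisTheta]
  field_simp

theorem tendsto_wallisTheta : Tendsto wallisTheta atTop (𝓝 1) := by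
  have hlim := (Wallis.tendsto_W_nhds_pi_div_two.const_mul (2 / π)).mul
    (tendsto_one_add_one_div_atTop (tendsto_natCast_atTop_atTop.const_mul_atTop two_pos))
  rw [show 2 / π * (π / 2) * 1 = 1 by field_simp] at hlim
  exact hlim.congr' (eventually_atTop.2 ⟨1, fun m hm => (wallisTheta_eq_W hm).symm⟩)

theorem wallisTheta_succ (hn : 1 ≤ n) :
    wallisTheta (n + 1) = wallisTheta n * (4 * n * (n + 1) / (2 * n + 1) ^ 2) := by
  have h2n : 2 * (n + 1) = 2 * n + 1 + 1 := by ring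
  simp only [wallisTheta, h2n, Nat.factorial_succ, mul_add, pow_add]
  push_cast
  field_simp
  ring

theorem wallisTheta_sq_div_succ_lt (hn : 1 ≤ n) :
    wallisTheta (n + 1) ^ 2 / (1 + 1 / (2 * (n + 1 : ℕ))) <
      wallisTheta n ^ 2 / (1 + 1 / (2 * n)) := by
  have hn' : (1 : ℝ) ≤ n := by exact_mod_cast hn
  have ratio : (4 * n * (n + 1) / (2 * n + 1) ^ 2) ^ 2 / (1 + 1 / (2 * (n + 1))) <
      1 / (1 + 1 / (2 * (n : ℝ))) := by
    -- with `x = 2n + 1` this is `(x - 1)(x + 1)³ < x³(x + 2)`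
    rw [div_lt_div_iff₀ (by positivity) (by positivity)]
    field_simp
    nlinarith
  calc _ = wallisTheta n ^ 2 * ((4 * n * (n + 1) / (2 * n + 1) ^ 2) ^ 2 /
        (1 + 1 / (2 * (n + 1)))) := by rw [wallisTheta_succ hn]; push_cast; ring
    _ < wallisTheta n ^ 2 * (1 / (1 + 1 / (2 * n))) := by
      gcongr; exact pow_pos (wallisTheta_pos hn) 2
    _ = _ := mul_one_div _ _

theorem wallisTheta_sq_div_lt_succ (hn : 1 ≤ n) :
    wallisTheta n ^ 2 / (1 + 1 / (2 * n - 1)) <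
      wallisTheta (n + 1) ^ 2 / (1 + 1 / (2 * (n + 1 : ℕ) - 1)) := by
  have hn' : (1 : ℝ) ≤ n := by exact_mod_cast hn
  have ratio : 1 / (1 + 1 / (2 * (n : ℝ) - 1)) <
      (4 * n * (n + 1) / (2 * n + 1) ^ 2) ^ 2 / (1 + 1 / (2 * (n + 1) - 1)) := by
    have : (0 : ℝ) < 2 * n - 1 := by linarith
    have : (0 : ℝ) < 2 * (n + 1) - 1 := by linarith
    -- with `x = 2n + 1` this is `x³(x - 2) < (x - 1)³(x + 1)`
    rw [div_lt_div_iff₀ (by positivity) (by positivity)]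
    field_simp
    nlinarith
  calc _ = wallisTheta n ^ 2 * (1 / (1 + 1 / (2 * n - 1))) := (mul_one_div _ _).symm
    _ < wallisTheta n ^ 2 * ((4 * n * (n + 1) / (2 * n + 1) ^ 2) ^ 2 /
        (1 + 1 / (2 * (n + 1) - 1))) := by gcongr; exact pow_pos (wallisTheta_pos hn) 2
    _ = _ := by rw [wallisTheta_succ hn]; push_cast; ring

theorem one_add_one_div_lt_wallisTheta_sq (hn : 1 ≤ n) : 1 + 1 / (2 * n) < wallisTheta n ^ 2 := by
  have hlim : Tendsto (fun m : ℕ => wallisTheta m ^ 2 / (1 + 1 / (2 * m))) atTop (𝓝 1) := by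
    simpa only [one_pow, div_one, Pi.div_def] using
      (tendsto_wallisTheta.pow 2).div (tendsto_one_add_one_div_atTop
        (tendsto_natCast_atTop_atTop.const_mul_atTop two_pos)) one_ne_zero
  have hlt := lt_of_tendsto_of_succ_lt (n := n) hlim fun m hm => by
    exact_mod_cast wallisTheta_sq_div_succ_lt (hn.trans hm)
  rwa [one_lt_div (by positivity)] at hlt

theorem wallisTheta_sq_lt_one_add_one_div (hn : 1 ≤ n) :
    wallisTheta n ^ 2 < 1 + 1 / (2 * n - 1) := by
  have h2n : Tendsto (fun m : ℕ => 2 * (m : ℝ) - 1) atTop atTop := by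
    simpa only [sub_eq_add_neg] using tendsto_atTop_add_const_right _ (-1)
      (tendsto_natCast_atTop_atTop.const_mul_atTop two_pos)
  have hlim :
      Tendsto (fun m : ℕ => wallisTheta m ^ 2 / (1 + 1 / (2 * m - 1))) atTop (𝓝 1) := by
    simpa only [one_pow, div_one, Pi.div_def] using
      (tendsto_wallisTheta.pow 2).div (tendsto_one_add_one_div_atTop h2n) one_ne_zero
  have hlt := lt_of_tendsto_of_lt_succ (n := n) hlim fun m hm => by
    exact_mod_cast wallisTheta_sq_div_lt_succ (hn.trans hm)
  have : (0 : ℝ) < 2 * n - 1 := by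
    have : (1 : ℝ) ≤ n := by exact_mod_cast hn
    linarith
  rwa [div_lt_one (by positivity)] at hlt

end

/-- Wallis's bounds: for `n ≥ 1`, the quantity
`θ_n = 2^{4n} (n!)^4 / (π n ((2n)!)²)` satisfies
`√(1 + 1/(2n)) < θ_n < √(1 + 1/(2n-1))`. -/
theorem wallis_theta_bounds (n : ℕ) (hn : 1 ≤ n) :
    Real.sqrt (1 + 1 / (2 * (n : ℝ))) <
        2 ^ (4 * n) * ((n.factorial : ℝ)) ^ 4 /
          (π * (n : ℝ) * (((2 * n).factorial : ℝ)) ^ 2) ∧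
      2 ^ (4 * n) * ((n.factorial : ℝ)) ^ 4 /
          (π * (n : ℝ) * (((2 * n).factorial : ℝ)) ^ 2) <
        Real.sqrt (1 + 1 / (2 * (n : ℝ) - 1)) :=
  ⟨(sqrt_lt' (wallisTheta_pos hn)).2 (one_add_one_div_lt_wallisTheta_sq hn),
    (lt_sqrt (wallisTheta_pos hn).le).2 (wallisTheta_sq_lt_one_add_one_div hn)⟩
end

section
/- First-order correction in De Moivre's form of Stirling's series: the sequence n · ( log(n!) - (n + 1/2)·log n + n - log √(2π) ) converges to 1/12 as n → ∞. -/
open Filter Real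

/-!
Write `log n! = (n + 1/2) log n - n + log √(2π) + μ n`. The power series of
`log (stirlingSeq n) - log (stirlingSeq (n + 1))` in `1 / (2n + 1)²` shows that each step
`μ n - μ (n + 1)` lies between the corresponding steps of `1 / (12 n + 1)` and `1 / (12 n)`. Since all three sequences tend to `0`, telescoping gives
`1 / (12 n + 1) ≤ μ n ≤ 1 / (12 n)`, and `n μ n → 1/12` by squeezing.
-/

theorem le_of_tendsto_of_sub_succ_le {a b : ℕ → ℝ} {L : ℝ} (ha : Tendsto a atTop (nhds L))
    (hb : Tendsto b atTop (nhds L)) (hab : ∀ n, a n - a (n + 1) ≤ b n - b (n + 1)) (n : ℕ) :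
    a n ≤ b n := by
  have hmono : Monotone fun k => a k - b k :=
    monotone_nat_of_le_succ fun k => by linarith [hab k]
  have hlim : Tendsto (fun k => a k - b k) atTop (nhds 0) := by simpa using ha.sub hb
  linarith [hmono.ge_of_tendsto hlim n]

namespace Stirling

/-- The remainder `μ n` of Stirling's formula, normalised by `stirlingSeq n = √π · exp (μ n)`. -/
noncomputable def stirlingError (n : ℕ) : ℝ :=
  log (stirlingSeq n) - log √π

theorem tendsto_stirlingError : Tendsto stirlingError atTop (nhds 0) := by
  have h := ((continuousAt_log (by positivity)).tendsto.comp
    tendsto_stirlingSeq_sqrt_pi).sub_const (log √π)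
  rwa [sub_self] at h

theorem stirlingError_eq {n : ℕ} (hn : n ≠ 0) :
    stirlingError n = log (n.factorial : ℝ) - ((n : ℝ) + 1 / 2) * log n + n - log √(2 * π) := by
  have hn' : (n : ℝ) ≠ 0 := Nat.cast_ne_zero.mpr hn
  rw [stirlingError, log_stirlingSeq_formula, log_mul two_ne_zero hn', log_div hn' (exp_ne_zero 1),
    log_exp, log_sqrt pi_pos.le, log_sqrt (by positivity), log_mul two_ne_zero pi_pos.ne']
  ring

/-- The first term `1 / (3 (2n + 1)²)` of the series for the step already dominates the step of
`1 / (12 n + 1)`. -/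
theorem one_div_sub_le_log_stirlingSeq_sdiff {n : ℕ} (hn : n ≠ 0) :
    1 / (12 * (n : ℝ) + 1) - 1 / (12 * ((n : ℝ) + 1) + 1)
      ≤ log (stirlingSeq n) - log (stirlingSeq (n + 1)) := by
  obtain ⟨m, rfl⟩ := Nat.exists_eq_succ_of_ne_zero hn
  have hfirst := le_hasSum (log_stirlingSeq_sdiff_hasSum m) 0 fun k _ => by positivity
  refine le_trans ?_ hfirst
  push_cast
  rw [pow_one, div_pow, one_pow, div_sub_div _ _ (by positivity) (by positivity),
    div_mul_div_comm, div_le_div_iff₀ (by positivity) (by positivity)]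
  nlinarith [(Nat.cast_nonneg m : (0 : ℝ) ≤ m)]

theorem tendsto_one_div_twelve_mul_add (c : ℝ) :
    Tendsto (fun k : ℕ => 1 / (12 * ((k : ℝ) + 1) + c)) atTop (nhds 0) := by
  refine tendsto_const_nhds.div_atTop (tendsto_atTop_add_const_right _ c ?_)
  exact (tendsto_natCast_atTop_atTop.atTop_add tendsto_const_nhds).const_mul_atTop (by norm_num)

theorem stirlingError_le {n : ℕ} (hn : n ≠ 0) : stirlingError n ≤ 1 / (12 * n) := by
  obtain ⟨m, rfl⟩ := Nat.exists_eq_succ_of_ne_zero hn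
  have key := le_of_tendsto_of_sub_succ_le (a := fun k => stirlingError (k + 1))
    (b := fun k : ℕ => 1 / (12 * ((k : ℝ) + 1)))
    (tendsto_stirlingError.comp (tendsto_add_atTop_nat 1))
    (by simpa using tendsto_one_div_twelve_mul_add 0) (fun k => ?_) m
  · simpa using key
  · have h := log_stirlingSeq_sdiff_le (k + 1)
    simp only [stirlingError, sub_sub_sub_cancel_right]
    refine h.trans_eq ?_
    push_cast
    field_simp
    ring

theorem one_div_le_stirlingError {n : ℕ} (hn : n ≠ 0) :
    1 / (12 * (n : ℝ) + 1) ≤ stirlingError n := by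
  obtain ⟨m, rfl⟩ := Nat.exists_eq_succ_of_ne_zero hn
  have key := le_of_tendsto_of_sub_succ_le (b := fun k => stirlingError (k + 1))
    (tendsto_one_div_twelve_mul_add 1)
    (tendsto_stirlingError.comp (tendsto_add_atTop_nat 1)) (fun k => ?_) m
  · simpa using key
  · have h := one_div_sub_le_log_stirlingSeq_sdiff k.succ_ne_zero
    simp only [stirlingError, sub_sub_sub_cancel_right]
    push_cast at h ⊢
    exact h

end Stirling

/-- First-order correction in De Moivre's form of Stirling's series:
`n (log(n!) - (n + 1/2) log n + n - log √(2π)) → 1/12`. -/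
theorem stirling_first_correction :
    Tendsto (fun n : ℕ =>
        (n : ℝ) * (Real.log (n.factorial : ℝ) - ((n : ℝ) + 1 / 2) * Real.log (n : ℝ)
          + (n : ℝ) - Real.log (Real.sqrt (2 * π))))
      atTop (nhds (1 / 12)) := by
  have hlower : Tendsto (fun n : ℕ => (n : ℝ) * (1 / (12 * n + 1))) atTop (nhds (1 / 12)) := by
    have h := (tendsto_natCast_div_add_atTop (1 / 12 : ℝ)).const_mul (1 / 12)
    rw [mul_one] at h
    refine h.congr fun n => ?_
    field_simp
  refine tendsto_of_tendsto_of_tendsto_of_le_of_le' hlower tendsto_const_nhds ?_ ?_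
  · filter_upwards [eventually_ne_atTop 0] with n hn
    rw [← Stirling.stirlingError_eq hn]
    gcongr
    exact Stirling.one_div_le_stirlingError hn
  · filter_upwards [eventually_ne_atTop 0] with n hn
    calc (n : ℝ) * (log (n.factorial : ℝ) - ((n : ℝ) + 1 / 2) * log n + n - log √(2 * π))
        = n * Stirling.stirlingError n := by rw [Stirling.stirlingError_eq hn]
      _ ≤ n * (1 / (12 * n)) := by gcongr; exact Stirling.stirlingError_le hn
      _ = 1 / 12 := by field_simp
end

section
/- First-order correction in Stirling's original series: with z = n + 1/2, the sequence z · ( log(n!) - ( z·log z - z + log √(2π) ) ) converges to -1/24 as n → ∞. -/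
/-!
Write `d n = log n! - (z log z - z + log √(2π))` with `z = n + 1/2`; Stirling's formula gives
`d n → 0`. With `t = 1 / (2 (n + 1))`, the increment `d (n + 1) - d n` equals
`1 - artanh t / t - log (1 - t²) / 2 = ∑ₖ t^(2k+2) / ((2k+2)(2k+3))`, a series of positive
terms bounded by `t^(2k+2) / 6`. Its first term and a geometric majorant give
`1 / (24 (n+1)²) ≤ d (n + 1) - d n ≤ 1 / (24 (n + 1/2) (n + 3/2))`, and summing from `n` to
`∞` yields `-1 / (24 z) ≤ d n ≤ -1 / (24 (n + 1))`. Multiplying by `z` squeezes `z · d n` to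
`-1/24`.
-/

open Filter Real Topology
open scoped Nat

namespace Real

theorem hasSum_one_sub_log_div_sub_half_log_one_sub_sq {t : ℝ} (ht : |t| < 1) (ht0 : t ≠ 0) :
    HasSum (fun k : ℕ => (t ^ 2) ^ (k + 1) / ((2 * k + 2) * (2 * k + 3)))
      (1 - (log (1 + t) - log (1 - t)) / (2 * t) - log (1 - t ^ 2) / 2) := by
  have ht2 : |t ^ 2| < 1 := by
    simpa [abs_pow] using pow_lt_one₀ (abs_nonneg t) ht two_ne_zero
  have hodd : HasSum (fun k : ℕ => (t ^ 2) ^ (k + 1) / (2 * k + 3))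
      ((log (1 + t) - log (1 - t)) / (2 * t) - 1) := by
    have h := (hasSum_log_sub_log_of_abs_lt_one ht).div_const (2 * t)
    rw [← hasSum_nat_add_iff' 1] at h
    have hconst : ∑ k ∈ Finset.range 1, 2 * (1 / (2 * k + 1 : ℝ)) * t ^ (2 * k + 1) / (2 * t)
        = 1 := by
      simp [ht0]
    rw [hconst] at h
    refine h.congr_fun fun k => ?_
    rw [← pow_mul]
    push_cast
    field_simp
    ring
  have heven : HasSum (fun k : ℕ => (t ^ 2) ^ (k + 1) / (2 * k + 2)) (-log (1 - t ^ 2) / 2) :=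
    (hasSum_pow_div_log_of_abs_lt_one ht2).div_const 2 |>.congr_fun fun k => by field_simp
  rw [show 1 - (log (1 + t) - log (1 - t)) / (2 * t) - log (1 - t ^ 2) / 2
      = -log (1 - t ^ 2) / 2 - ((log (1 + t) - log (1 - t)) / (2 * t) - 1) by ring]
  exact (heven.sub hodd).congr_fun fun k => by field_simp; ring

theorem tendsto_add_mul_log_one_add_div_atTop (a t : ℝ) :
    Tendsto (fun x => (x + a) * log (1 + t / x)) atTop (𝓝 t) := by
  have hlog : Tendsto (fun x => log (1 + t / x)) atTop (𝓝 0) := by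
    have h : Tendsto (fun x : ℝ => 1 + t / x) atTop (𝓝 1) := by
      simpa using tendsto_const_nhds.add (tendsto_const_nhds.div_atTop (tendsto_id (α := ℝ)))
    simpa [Function.comp_def] using (continuousAt_log one_ne_zero).tendsto.comp h
  simpa [add_mul] using (tendsto_mul_log_one_add_div_atTop t).add (hlog.const_mul a)

end Real

section SeriesBounds

variable {x s : ℝ}

theorem div_six_le_of_hasSum_pow_succ_div
    (hs : HasSum (fun k : ℕ => x ^ (k + 1) / ((2 * k + 2) * (2 * k + 3))) s) (hx : 0 ≤ x) :
    x / 6 ≤ s := by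
  have h0 := le_hasSum hs 0 fun k _ => by positivity
  norm_num at h0
  linarith

theorem le_div_of_hasSum_pow_succ_div
    (hs : HasSum (fun k : ℕ => x ^ (k + 1) / ((2 * k + 2) * (2 * k + 3))) s) (hx0 : 0 ≤ x)
    (hx1 : x < 1) : s ≤ x / (6 * (1 - x)) := by
  have hgeo := (hasSum_geometric_of_lt_one hx0 hx1).mul_left (x / 6)
  refine (hasSum_le (fun k => ?_) hs hgeo).trans_eq (by field_simp)
  rw [pow_succ', div_le_iff₀ (by positivity)]
  have : (6 : ℝ) ≤ (2 * k + 2) * (2 * k + 3) := by nlinarith [k.cast_nonneg (α := ℝ)]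
  nlinarith [mul_le_mul_of_nonneg_left this (mul_nonneg hx0 (pow_nonneg hx0 k))]

end SeriesBounds

theorem neg_le_of_tendsto_of_succ_sub_le {u f : ℕ → ℝ} (hu : Tendsto u atTop (𝓝 0))
    (hf : Tendsto f atTop (𝓝 0)) (h : ∀ n, u (n + 1) - u n ≤ f n - f (n + 1)) (n : ℕ) :
    -f n ≤ u n := by
  have hanti : Antitone fun m => u m + f m := antitone_nat_of_succ_le fun m => by linarith [h m]
  have := hanti.le_of_tendsto (by simpa using hu.add hf) n
  linarith

theorem le_neg_of_tendsto_of_sub_le_succ_sub {u f : ℕ → ℝ} (hu : Tendsto u atTop (𝓝 0))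
    (hf : Tendsto f atTop (𝓝 0)) (h : ∀ n, f n - f (n + 1) ≤ u (n + 1) - u n) (n : ℕ) :
    u n ≤ -f n := by
  have hmono : Monotone fun m => u m + f m := monotone_nat_of_le_succ fun m => by linarith [h m]
  have := hmono.ge_of_tendsto (by simpa using hu.add hf) n
  linarith

theorem tendsto_one_div_const_mul_add_atTop_nhds_zero (c a : ℝ) (hc : 0 < c) :
    Tendsto (fun n : ℕ => 1 / (c * ((n : ℝ) + a))) atTop (𝓝 0) :=
  ((tendsto_atTop_add_const_right _ a tendsto_natCast_atTop_atTop).const_mul_atTop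
    hc).inv_tendsto_atTop.congr fun _ => (one_div _).symm

namespace Stirling

noncomputable def halfIntegerError (n : ℕ) : ℝ :=
  log (n ! : ℝ) -
    (((n : ℝ) + 1 / 2) * log ((n : ℝ) + 1 / 2) - ((n : ℝ) + 1 / 2) + log √(2 * π))

theorem halfIntegerError_eq (n : ℕ) (hn : n ≠ 0) :
    halfIntegerError n = (log (stirlingSeq n) - log √π)
      + (1 / 2 - ((n : ℝ) + 1 / 2) * log (1 + (1 / 2) / n)) := by
  have hn0 : (0 : ℝ) < n := by positivity
  have hsplit : log (1 + (1 / 2) / n) = log ((n : ℝ) + 1 / 2) - log n := by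
    rw [← log_div (by positivity) hn0.ne']
    congr 1
    field_simp
  rw [halfIntegerError, hsplit, log_stirlingSeq_formula, log_div hn0.ne' (exp_ne_zero 1),
    log_exp, log_mul two_ne_zero hn0.ne', log_sqrt (by positivity), log_sqrt pi_pos.le,
    log_mul two_ne_zero pi_ne_zero]
  ring

theorem tendsto_halfIntegerError : Tendsto halfIntegerError atTop (𝓝 0) := by
  have hstirling : Tendsto (fun n => log (stirlingSeq n) - log √π) atTop (𝓝 0) := by
    simpa using ((continuousAt_log (by positivity)).tendsto.comp
      tendsto_stirlingSeq_sqrt_pi).sub_const (log √π)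
  have hcorr :
      Tendsto (fun n : ℕ => ((n : ℝ) + 1 / 2) * log (1 + (1 / 2) / n)) atTop (𝓝 (1 / 2)) :=
    (tendsto_add_mul_log_one_add_div_atTop _ _).comp tendsto_natCast_atTop_atTop
  have hsum := hstirling.add (hcorr.const_sub (1 / 2))
  rw [sub_self, add_zero] at hsum
  refine hsum.congr' ?_
  filter_upwards [eventually_ne_atTop 0] with n hn
  exact (halfIntegerError_eq n hn).symm

theorem hasSum_halfIntegerError_succ_sub (n : ℕ) :
    HasSum
      (fun k : ℕ => ((1 / (2 * ((n : ℝ) + 1))) ^ 2) ^ (k + 1) / ((2 * k + 2) * (2 * k + 3)))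
      (halfIntegerError (n + 1) - halfIntegerError n) := by
  set t : ℝ := 1 / (2 * ((n : ℝ) + 1)) with ht
  have ht0 : 0 < t := by positivity
  have ht1 : t < 1 := by rw [ht, div_lt_one (by positivity)]; linarith [n.cast_nonneg (α := ℝ)]
  convert Real.hasSum_one_sub_log_div_sub_half_log_one_sub_sq (abs_lt.2 ⟨by linarith, ht1⟩)
    ht0.ne' using 1
  have hplus : log (1 + t) = log ((n : ℝ) + 3 / 2) - log ((n : ℝ) + 1) := by
    rw [← log_div (by positivity) (by positivity)]; congr 1; rw [ht]; field_simp; ring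
  have hminus : log (1 - t) = log ((n : ℝ) + 1 / 2) - log ((n : ℝ) + 1) := by
    rw [← log_div (by positivity) (by positivity)]; congr 1; rw [ht]; field_simp; ring
  have hsq : log (1 - t ^ 2) = log (1 + t) + log (1 - t) := by
    rw [← log_mul (by positivity) (by linarith)]; ring_nf
  have hdiv : (log (1 + t) - log (1 - t)) / (2 * t)
      = ((n : ℝ) + 1) * (log (1 + t) - log (1 - t)) := by
    rw [ht]; field_simp
  rw [hdiv, hsq, hplus, hminus, halfIntegerError, halfIntegerError, Nat.factorial_succ,
    Nat.cast_mul, log_mul (by positivity) (by positivity), Nat.cast_succ,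
    show (n : ℝ) + 1 + 1 / 2 = n + 3 / 2 by ring]
  ring

theorem one_div_le_halfIntegerError_succ_sub (n : ℕ) :
    1 / (24 * ((n : ℝ) + 1) ^ 2) ≤ halfIntegerError (n + 1) - halfIntegerError n :=
  (div_six_le_of_hasSum_pow_succ_div (hasSum_halfIntegerError_succ_sub n)
    (by positivity)).trans_eq' (by field_simp; ring)

theorem halfIntegerError_succ_sub_le (n : ℕ) :
    halfIntegerError (n + 1) - halfIntegerError n
      ≤ 1 / (24 * ((n : ℝ) + 1 / 2) * ((n : ℝ) + 3 / 2)) := by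
  have hx : (1 / (2 * ((n : ℝ) + 1))) ^ 2 < 1 := by
    rw [div_pow, one_pow, div_lt_one (by positivity)]
    nlinarith [n.cast_nonneg (α := ℝ)]
  refine (le_div_of_hasSum_pow_succ_div (hasSum_halfIntegerError_succ_sub n) (by positivity)
    hx).trans_eq ?_
  rw [div_eq_div_iff (mul_pos (by norm_num) (sub_pos.2 hx)).ne' (by positivity)]
  field_simp
  ring

theorem neg_one_div_le_halfIntegerError (n : ℕ) :
    -(1 / (24 * ((n : ℝ) + 1 / 2))) ≤ halfIntegerError n := by
  refine neg_le_of_tendsto_of_succ_sub_le tendsto_halfIntegerError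
    (tendsto_one_div_const_mul_add_atTop_nhds_zero 24 (1 / 2) (by norm_num))
    (fun m => (halfIntegerError_succ_sub_le m).trans_eq ?_) n
  push_cast
  field_simp
  ring

theorem halfIntegerError_le_neg_one_div (n : ℕ) :
    halfIntegerError n ≤ -(1 / (24 * ((n : ℝ) + 1))) := by
  refine le_neg_of_tendsto_of_sub_le_succ_sub tendsto_halfIntegerError
    (tendsto_one_div_const_mul_add_atTop_nhds_zero 24 1 (by norm_num))
    (fun m => le_trans ?_ (one_div_le_halfIntegerError_succ_sub m)) n
  push_cast
  rw [div_sub_div _ _ (by positivity) (by positivity),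
    div_le_div_iff₀ (by positivity) (by positivity)]
  nlinarith [m.cast_nonneg (α := ℝ)]

end Stirling

/-- First-order correction in Stirling's original series: with `z = n + 1/2`,
`z (log(n!) - (z log z - z + log √(2π))) → -1/24`. -/
theorem stirling_half_integer_first_correction :
    Tendsto (fun n : ℕ =>
        ((n : ℝ) + 1 / 2) *
          (Real.log (n.factorial : ℝ) -
            (((n : ℝ) + 1 / 2) * Real.log ((n : ℝ) + 1 / 2) - ((n : ℝ) + 1 / 2)
              + Real.log (Real.sqrt (2 * π)))))
      atTop (nhds (-1 / 24)) := by
  have hlower (n : ℕ) : -1 / 24 ≤ ((n : ℝ) + 1 / 2) * Stirling.halfIntegerError n := by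
    have := mul_le_mul_of_nonneg_left (Stirling.neg_one_div_le_halfIntegerError n)
      (by positivity : (0 : ℝ) ≤ n + 1 / 2)
    refine le_of_eq_of_le ?_ this
    field_simp
  have hupper (n : ℕ) :
      ((n : ℝ) + 1 / 2) * Stirling.halfIntegerError n
        ≤ -1 / 24 + 1 / 48 * (1 / ((n : ℝ) + 1)) := by
    refine (mul_le_mul_of_nonneg_left (Stirling.halfIntegerError_le_neg_one_div n)
      (by positivity)).trans_eq ?_
    field_simp
    ring
  have hlim : Tendsto (fun n : ℕ => -1 / 24 + 1 / 48 * (1 / ((n : ℝ) + 1))) atTop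
      (𝓝 (-1 / 24)) := by
    simpa using (tendsto_one_div_add_atTop_nhds_zero_nat.const_mul (1 / 48 : ℝ)).const_add
      (-1 / 24 : ℝ)
  exact tendsto_of_tendsto_of_tendsto_of_le_of_le tendsto_const_nhds hlim hlower hupper
end

section
/- Stirling's coefficient identities: for every natural number n ≥ 1, ∑_{k=1}^{n} binom(2n-1, 2k-2) · (1 - 2^{2k-1}) · B_{2k} / (2k(2k-1)) = -1 / (4n(2n+1)). In particular the coefficients a_{2k-1} = (1 - 2^{2k-1}) B_{2k}/(2k(2k-1)) (namely a_1 = -1/12, a_3 = 7/360, a_5 = -31/1260, ...) solve Stirling's triangular system of linear equations. -/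
/-!
For odd `M = 2n + 1` both `B_M(1) = B'_M` and `B_M(1/2)` vanish, the latter by the reflection
`B_M(1 - x) = -B_M(x)`. Expanding the two Bernoulli polynomials gives
`∑ⱼ C(M, j) (1 - 2^j / 2) Bⱼ = 0`, in which every odd term vanishes (`j = 1` through the factor,
`j ≥ 3` since `Bⱼ = 0`), so `1/2 + ∑_{k=1}^{n} C(2n+1, 2k) (1 - 2^{2k-1}) B_{2k} = 0`.
The identity follows from `C(2n-1, 2k-2) / (2k(2k-1)) = C(2n+1, 2k) / ((2n+1) 2n)`.
-/

open Finset

theorem Finset.sum_range_two_mul {M : Type*} [AddCommMonoid M] (f : ℕ → M) (N : ℕ) :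
    ∑ j ∈ range (2 * N), f j = ∑ k ∈ range N, (f (2 * k) + f (2 * k + 1)) := by
  induction N with
  | zero => simp
  | succ N ih => rw [mul_add_one, sum_range_succ, sum_range_succ, sum_range_succ, ih, add_assoc]

theorem Polynomial.bernoulli_eval_half_of_odd {n : ℕ} (hn : Odd n) :
    (Polynomial.bernoulli n).eval (1 / 2) = 0 := by
  have h := Polynomial.bernoulli_eval_one_sub n (1 / 2)
  rw [hn.neg_one_pow] at h
  norm_num at h
  linarith

theorem sum_choose_mul_bernoulli_of_odd {n : ℕ} (hn : Odd n) (h1 : 1 < n) :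
    ∑ j ∈ range (n + 1), (n.choose j : ℚ) * bernoulli j = 0 := by
  rw [sum_range_succ, sum_bernoulli, if_neg h1.ne', bernoulli_eq_zero_of_odd hn h1, mul_zero,
    add_zero]

theorem sum_choose_mul_two_pow_mul_bernoulli (n : ℕ) :
    ∑ j ∈ range (n + 1), (n.choose j : ℚ) * 2 ^ j * bernoulli j =
      2 ^ n * (Polynomial.bernoulli n).eval (1 / 2) := by
  simp only [Polynomial.bernoulli, Polynomial.eval_finsetSum, Polynomial.eval_monomial, mul_sum]
  refine sum_congr rfl fun j hj => ?_
  have hp : (2 : ℚ) ^ n = 2 ^ j * 2 ^ (n - j) := by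
    rw [← pow_add, Nat.add_sub_cancel' (mem_range_succ_iff.mp hj)]
  rw [hp, one_div, inv_pow]
  field_simp

theorem Nat.choose_add_two_mul (N j : ℕ) :
    (N + 2).choose (j + 2) * ((j + 2) * (j + 1)) = (N + 2) * (N + 1) * N.choose j := by
  have h₁ := Nat.add_one_mul_choose_eq (N + 1) (j + 1)
  have h₂ := Nat.add_one_mul_choose_eq N j
  calc (N + 2).choose (j + 2) * ((j + 2) * (j + 1))
      = (N + 2) * ((N + 1).choose (j + 1) * (j + 1)) := by rw [← mul_assoc, ← h₁]; ring
    _ = (N + 2) * (N + 1) * N.choose j := by rw [← h₂]; ring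

theorem sum_choose_mul_one_sub_two_pow_div_two_mul_bernoulli_of_odd {n : ℕ} (hn : Odd n)
    (h1 : 1 < n) :
    ∑ j ∈ range (n + 1), (n.choose j : ℚ) * (1 - 2 ^ j / 2) * bernoulli j = 0 := by
  have h₂ := sum_choose_mul_two_pow_mul_bernoulli n
  rw [Polynomial.bernoulli_eval_half_of_odd hn, mul_zero] at h₂
  calc ∑ j ∈ range (n + 1), (n.choose j : ℚ) * (1 - 2 ^ j / 2) * bernoulli j
      = ∑ j ∈ range (n + 1), (n.choose j : ℚ) * bernoulli j
        - 1 / 2 * ∑ j ∈ range (n + 1), (n.choose j : ℚ) * 2 ^ j * bernoulli j := by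
        rw [mul_sum, ← sum_sub_distrib]
        exact sum_congr rfl fun j _ => by ring
    _ = 0 := by rw [sum_choose_mul_bernoulli_of_odd hn h1, h₂, mul_zero, sub_zero]

theorem sum_choose_mul_one_sub_two_pow_mul_bernoulli {n : ℕ} (hn : 1 ≤ n) :
    ∑ k ∈ Icc 1 n, ((2 * n + 1).choose (2 * k) : ℚ) * (1 - 2 ^ (2 * k - 1)) * bernoulli (2 * k) =
      -1 / 2 := by
  set M := 2 * n + 1
  set g : ℕ → ℚ := fun j => (M.choose j : ℚ) * (1 - 2 ^ j / 2) * bernoulli j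
  have hg : ∑ j ∈ range (M + 1), g j = 0 :=
    sum_choose_mul_one_sub_two_pow_div_two_mul_bernoulli_of_odd (odd_two_mul_add_one n)
      (by omega)
  have hg_odd : ∀ k, g (2 * k + 1) = 0 := by
    rintro (_ | k)
    · simp [g]
    · simp [g, bernoulli_eq_zero_of_odd (odd_two_mul_add_one (k + 1)) (by omega)]
  rw [show M + 1 = 2 * (n + 1) by omega, sum_range_two_mul] at hg
  simp only [hg_odd, add_zero] at hg
  rw [sum_range_eq_add_Ico _ (n := n + 1) (by omega), Ico_add_one_right_eq_Icc] at hg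
  have hg_zero : g (2 * 0) = 1 / 2 := by norm_num [g]
  have hg_even : ∀ k ∈ Icc 1 n,
      (M.choose (2 * k) : ℚ) * (1 - 2 ^ (2 * k - 1)) * bernoulli (2 * k) = g (2 * k) := by
    intro k hk
    obtain ⟨j, rfl⟩ : ∃ j, k = j + 1 := ⟨k - 1, by grind⟩
    rw [show 2 * (j + 1) - 1 = 2 * j + 1 by omega, show 2 * (j + 1) = 2 * j + 1 + 1 by ring]
    simp only [g, pow_succ]
    ring
  rw [sum_congr rfl hg_even]
  linarith

theorem cast_choose_two_mul_sub_one_div_eq {n k : ℕ} (hn : 1 ≤ n) (hk : 1 ≤ k) :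
    ((2 * n - 1).choose (2 * k - 2) : ℚ) / (2 * k * (2 * k - 1)) =
      (2 * n + 1).choose (2 * k) / ((2 * n + 1) * (2 * n)) := by
  have h := Nat.choose_add_two_mul (2 * n - 1) (2 * k - 2)
  rw [show 2 * n - 1 + 2 = 2 * n + 1 by omega, show 2 * k - 2 + 2 = 2 * k by omega,
    show 2 * k - 2 + 1 = 2 * k - 1 by omega, show 2 * n - 1 + 1 = 2 * n by omega] at h
  qify [show 1 ≤ 2 * k by omega] at h
  have hk' : (1 : ℚ) ≤ k := mod_cast hk
  rw [div_eq_div_iff (by nlinarith) (by positivity)]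
  linear_combination -h

/-- Stirling's coefficient identities: for `n ≥ 1`,
`∑_{k=1}^{n} binom(2n-1, 2k-2) (1 - 2^{2k-1}) B_{2k}/(2k(2k-1)) = -1/(4n(2n+1))`,
so the coefficients `a_{2k-1} = (1 - 2^{2k-1}) B_{2k}/(2k(2k-1))` solve Stirling's
triangular system. -/
theorem stirling_coefficient_identity (n : ℕ) (hn : 1 ≤ n) :
    ∑ k ∈ Finset.Icc 1 n,
        (((2 * n - 1).choose (2 * k - 2) : ℕ) : ℚ) * (1 - 2 ^ (2 * k - 1)) *
          bernoulli (2 * k) / ((2 * (k : ℚ)) * (2 * (k : ℚ) - 1)) =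
      -1 / (4 * (n : ℚ) * (2 * (n : ℚ) + 1)) := by
  have hterm : ∀ k ∈ Icc 1 n,
      (((2 * n - 1).choose (2 * k - 2) : ℕ) : ℚ) * (1 - 2 ^ (2 * k - 1)) *
          bernoulli (2 * k) / ((2 * (k : ℚ)) * (2 * (k : ℚ) - 1)) =
        ((2 * n + 1).choose (2 * k) : ℚ) * (1 - 2 ^ (2 * k - 1)) * bernoulli (2 * k) /
          ((2 * n + 1) * (2 * n)) := fun k hk => by
    rw [mul_assoc, mul_div_right_comm, cast_choose_two_mul_sub_one_div_eq hn (mem_Icc.mp hk).1,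
      ← mul_div_right_comm, ← mul_assoc]
  rw [sum_congr rfl hterm, ← sum_div, sum_choose_mul_one_sub_two_pow_mul_bernoulli hn]
  field_simp
  ring
end

section
/- Bayes's divergence theorem: for every real x > 0, the terms B_{2k} / (2k(2k-1) x^{2k-1}) of Stirling's series tend to infinity in absolute value as k → ∞; in particular the series ∑_{k=1}^{∞} B_{2k} / (2k(2k-1) x^{2k-1}) is not summable. -/
/-!
Euler's formula `ζ(2k) = (-1)^(k+1) 2^(2k-1) π^(2k) B_(2k) / (2k)!` together with `ζ(2k) ≥ 1`
(the first term of the series) gives `|B_(2k)| ≥ (2k)! / (2^(2k-1) π^(2k))`. Hence the `k`-th term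
of Stirling's series is bounded below by a constant multiple of `(2k-2)! / (2πx)^(2k-2)`, which
tends to infinity since factorials outgrow every geometric sequence; and the terms of a summable
series tend to zero.
-/

open Filter Real Nat

theorem tendsto_factorial_div_pow_atTop {c : ℝ} (hc : 0 < c) :
    Tendsto (fun n : ℕ => (n ! : ℝ) / c ^ n) atTop atTop := by
  have hpos : Tendsto (fun n : ℕ => c ^ n / (n ! : ℝ)) atTop (nhdsWithin 0 (Set.Ioi 0)) :=
    tendsto_nhdsWithin_iff.2 ⟨FloorSemiring.tendsto_pow_div_factorial_atTop c,
      Eventually.of_forall fun n => Set.mem_Ioi.2 (by positivity)⟩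
  exact hpos.inv_tendsto_nhdsGT_zero.congr fun n => inv_div _ _

theorem factorial_div_le_abs_bernoulli {k : ℕ} (hk : k ≠ 0) :
    ((2 * k)! : ℝ) / (2 ^ (2 * k - 1) * π ^ (2 * k)) ≤ |(bernoulli (2 * k) : ℝ)| := by
  have hzeta : 1 ≤ (-1 : ℝ) ^ (k + 1) * 2 ^ (2 * k - 1) * π ^ (2 * k) * bernoulli (2 * k) /
      (2 * k)! := by
    simpa using le_hasSum (hasSum_zeta_nat hk) 1 fun j _ => by positivity
  have habs := hzeta.trans (le_abs_self _)
  simp only [abs_div, abs_mul, abs_pow, abs_neg, abs_one, one_pow, one_mul, abs_two,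
    abs_of_pos pi_pos, Nat.abs_cast] at habs
  rw [one_le_div (by positivity)] at habs
  rwa [div_le_iff₀' (by positivity)]

noncomputable def stirlingTerm (x : ℝ) (k : ℕ) : ℝ :=
  (bernoulli (2 * (k + 1)) : ℝ) /
    ((2 * ((k : ℝ) + 1)) * (2 * ((k : ℝ) + 1) - 1) * x ^ (2 * (k + 1) - 1))

theorem factorial_div_pow_le_abs_stirlingTerm {x : ℝ} (hx : 0 < x) (k : ℕ) :
    ((2 * k)! : ℝ) / (2 * π * x) ^ (2 * k) / (2 * π ^ 2 * x) ≤ |stirlingTerm x k| := by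
  have hfac : ((2 * (k + 1))! : ℝ) = (2 * (k + 1)) * (2 * (k + 1) - 1) * (2 * k)! := by
    rw [show 2 * (k + 1) = 2 * k + 1 + 1 by ring, factorial_succ, factorial_succ]
    push_cast
    ring
  have hexp : 2 * (k + 1) - 1 = 2 * k + 1 := by omega
  have hodd : (0 : ℝ) < 2 * ((k : ℝ) + 1) - 1 := by linarith [k.cast_nonneg (α := ℝ)]
  have hden : 0 < (2 * ((k : ℝ) + 1)) * (2 * ((k : ℝ) + 1) - 1) * x ^ (2 * k + 1) := by
    positivity
  calc
    _ = ((2 * (k + 1))! : ℝ) / (2 ^ (2 * (k + 1) - 1) * π ^ (2 * (k + 1))) /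
        ((2 * ((k : ℝ) + 1)) * (2 * ((k : ℝ) + 1) - 1) * x ^ (2 * k + 1)) := by
      rw [hfac, hexp]
      field_simp [hodd.ne']
      ring
    _ ≤ |(bernoulli (2 * (k + 1)) : ℝ)| /
        ((2 * ((k : ℝ) + 1)) * (2 * ((k : ℝ) + 1) - 1) * x ^ (2 * k + 1)) := by
      gcongr
      exact factorial_div_le_abs_bernoulli k.succ_ne_zero
    _ = |stirlingTerm x k| := by rw [stirlingTerm, hexp, abs_div, abs_of_pos hden]

/-- Bayes's divergence theorem: for `x > 0`, the terms `B_{2k}/(2k(2k-1) x^{2k-1})`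
of Stirling's series tend to infinity in absolute value, and in particular the
series is not summable. -/
theorem bayes_divergence (x : ℝ) (hx : 0 < x) :
    Tendsto (fun k : ℕ =>
        |((bernoulli (2 * (k + 1)) : ℚ) : ℝ) /
          ((2 * ((k : ℝ) + 1)) * (2 * ((k : ℝ) + 1) - 1) * x ^ (2 * (k + 1) - 1))|)
      atTop atTop ∧
    ¬ Summable (fun k : ℕ =>
        ((bernoulli (2 * (k + 1)) : ℚ) : ℝ) /
          ((2 * ((k : ℝ) + 1)) * (2 * ((k : ℝ) + 1) - 1) * x ^ (2 * (k + 1) - 1))) := by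
  change Tendsto (fun k => |stirlingTerm x k|) atTop atTop ∧ ¬ Summable (stirlingTerm x)
  have hlower : Tendsto (fun k : ℕ => ((2 * k)! : ℝ) / (2 * π * x) ^ (2 * k) / (2 * π ^ 2 * x))
      atTop atTop :=
    ((tendsto_factorial_div_pow_atTop (by positivity)).comp
      (tendsto_id.const_mul_atTop' two_pos)).atTop_div_const (by positivity)
  have habs : Tendsto (fun k => |stirlingTerm x k|) atTop atTop :=
    tendsto_atTop_mono (factorial_div_pow_le_abs_stirlingTerm hx) hlower
  refine ⟨habs, fun hsum => not_tendsto_nhds_of_tendsto_atTop habs 0 ?_⟩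
  simpa only [abs_zero] using hsum.tendsto_atTop_zero.abs
end

section
/- Euler's partial fraction expansion used by Schaar: for every real x ≠ 0, 1/(e^x - 1) = 1/x - 1/2 + ∑_{k=1}^{∞} 2x / (x² + 4k²π²), where the series on the right converges. -/
/-!
Put `z = x i / (2π)` into the Mittag-Leffler expansion
`π cot (π z) = 1/z + ∑_{n ≥ 1} 2z / (z² - n²)`. Since `e^{2π i z} = e^{-x}`, the left side is
`-π i (1 + 2 / (e^x - 1))`, and each term is `-2π i · 2x / (x² + 4n²π²)`; dividing by `-2π i`
gives the expansion.
-/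

open Real Complex

theorem Complex.mem_integerComplement_of_im_ne_zero {z : ℂ} (hz : z.im ≠ 0) :
    z ∈ integerComplement :=
  fun ⟨n, hn⟩ => hz (by simp [← hn])

theorem Complex.hasSum_pi_mul_cot_pi_mul_sub_inv {z : ℂ} (hz : z ∈ integerComplement) :
    HasSum (fun n : ℕ => 2 * z / (z ^ 2 - (n + 1) ^ 2)) (π * cot (π * z) - 1 / z) := by
  have h := (summable_cotTerm hz).hasSum_iff_tendsto_nat.mpr (tendsto_logDeriv_euler_cot_sub hz)
  convert h using 2 with n
  rw [cotTerm_identity hz n]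
  ring

theorem Complex.two_mul_div_sq_sub_sq_of_ofReal_mul_I (t : ℝ) (n : ℕ) :
    let z : ℂ := (t / (2 * π) : ℝ) * I
    2 * z / (z ^ 2 - (n + 1) ^ 2) =
      -2 * π * I * (2 * t / (t ^ 2 + 4 * ((n : ℝ) + 1) ^ 2 * π ^ 2) : ℝ) := by
  intro z
  have hden : (t : ℂ) ^ 2 + 4 * ((n : ℂ) + 1) ^ 2 * π ^ 2 ≠ 0 := by
    exact_mod_cast (by positivity : t ^ 2 + 4 * ((n : ℝ) + 1) ^ 2 * π ^ 2 ≠ 0)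
  have hsq : z ^ 2 - (n + 1) ^ 2 = -(t ^ 2 + 4 * ((n : ℂ) + 1) ^ 2 * π ^ 2) / (4 * π ^ 2) := by
    simp only [z]; push_cast; field_simp; rw [I_sq]; ring
  rw [hsq]
  simp only [z]
  push_cast
  field_simp
  ring

theorem Complex.pi_mul_cot_sub_inv_of_ofReal_mul_I {t : ℝ} (ht : t ≠ 0) :
    let z : ℂ := (t / (2 * π) : ℝ) * I
    π * cot (π * z) - 1 / z = -2 * π * I * (1 / (Real.exp t - 1) - (1 / t - 1 / 2) : ℝ) := by
  intro z
  have hexp_two_pi_I : Complex.exp (2 * π * I * z) = (Complex.exp t)⁻¹ := by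
    rw [← Complex.exp_neg]
    congr 1
    simp only [z]; push_cast; field_simp; rw [I_sq]; ring
  have hexp_sub_one : Complex.exp t - 1 ≠ 0 := by
    rw [← ofReal_exp]
    exact_mod_cast sub_ne_zero.mpr (Real.exp_eq_one_iff t |>.not.mpr ht)
  have hone_sub_inv : 1 - (Complex.exp t)⁻¹ ≠ 0 := by
    rw [sub_ne_zero, ne_comm, inv_ne_one]; exact sub_ne_zero.mp hexp_sub_one
  rw [cot_pi_eq_exp_ratio, hexp_two_pi_I]
  simp only [z]
  push_cast
  field_simp
  rw [I_sq]
  ring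

/-- Euler's partial fraction expansion: for real `x ≠ 0`,
`1/(e^x - 1) = 1/x - 1/2 + ∑_{k=1}^∞ 2x/(x² + 4k²π²)`, the series converging. -/
theorem euler_partial_fraction (x : ℝ) (hx : x ≠ 0) :
    HasSum (fun k : ℕ => 2 * x / (x ^ 2 + 4 * ((k : ℝ) + 1) ^ 2 * π ^ 2))
      (1 / (Real.exp x - 1) - (1 / x - 1 / 2)) := by
  have hz : ((x / (2 * π) : ℝ) * I : ℂ) ∈ integerComplement := by
    refine mem_integerComplement_of_im_ne_zero ?_
    rw [mul_I_im, ofReal_re]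
    exact div_ne_zero hx (by positivity)
  have h := hasSum_pi_mul_cot_pi_mul_sub_inv hz
  simp only [two_mul_div_sq_sub_sq_of_ofReal_mul_I, pi_mul_cot_sub_inv_of_ofReal_mul_I hx] at h
  exact hasSum_ofReal.mp ((hasSum_mul_left_iff (by simp [pi_ne_zero])).mp h)
end

section
/- De Moivre's asymptotics of the central binomial coefficient: the sequence binom(2n, n) · √(πn) / 2^{2n} converges to 1 as n → ∞. -/
/-!
With Stirling's sequence `s n = n! / (√(2n) (n/e)^n)`, the normalized central binomial coefficient
equals `√π · s (2n) / (s n)²` exactly, and this tends to `√π · √π / π = 1` because `s n → √π`.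
-/

open Filter Real Stirling
open scoped Nat Topology

lemma Stirling.stirlingSeq_pos {n : ℕ} (hn : n ≠ 0) : 0 < stirlingSeq n := by
  obtain ⟨m, rfl⟩ := Nat.exists_eq_succ_of_ne_zero hn
  exact stirlingSeq'_pos m

lemma Nat.factorial_eq_stirlingSeq_mul {n : ℕ} (hn : n ≠ 0) :
    (n ! : ℝ) = stirlingSeq n * √(2 * n) * (n / exp 1) ^ n := by
  rw [stirlingSeq]
  field_simp

lemma Nat.choose_two_mul_self_mul_sqrt_div_eq_stirlingSeq {n : ℕ} (hn : n ≠ 0) :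
    ((2 * n).choose n : ℝ) * √(π * n) / 2 ^ (2 * n) =
      √π * stirlingSeq (2 * n) / stirlingSeq n ^ 2 := by
  have hchoose : ((2 * n).choose n : ℝ) * n ! ^ 2 = (2 * n)! := by
    rw [two_mul, sq, ← mul_assoc]
    exact_mod_cast Nat.add_choose_mul_factorial_mul_factorial n n
  have hsqrt : √(2 * (2 * n : ℕ)) = 2 * √n := by
    push_cast
    rw [← mul_assoc, Real.sqrt_mul (by norm_num), show (2 : ℝ) * 2 = 2 ^ 2 by norm_num,
      Real.sqrt_sq (by norm_num)]
  have hpow : ((2 * n : ℕ) / exp 1) ^ (2 * n) = 2 ^ (2 * n) * ((n / exp 1) ^ n) ^ 2 := by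
    push_cast
    rw [mul_div_assoc, mul_pow, ← pow_mul, mul_comm n 2]
  have hsq : √(2 * n) ^ 2 = 2 * √n ^ 2 := by
    rw [Real.sq_sqrt (by positivity), Real.sq_sqrt (by positivity)]
  rw [factorial_eq_stirlingSeq_mul hn, factorial_eq_stirlingSeq_mul (by omega), hsqrt, hpow,
    mul_pow, mul_pow, hsq] at hchoose
  have hs : stirlingSeq n ≠ 0 := (stirlingSeq_pos hn).ne'
  have hx : (n / exp 1 : ℝ) ^ n ≠ 0 := by positivity
  have hn' : √(n : ℝ) ≠ 0 := by positivity
  rw [Real.sqrt_mul pi_pos.le]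
  field_simp
  apply mul_left_cancel₀ (mul_ne_zero (pow_ne_zero 2 hx) hn')
  linear_combination (1 / 2 : ℝ) * hchoose

/-- De Moivre's asymptotics of the central binomial coefficient:
`binom(2n,n) √(πn) / 2^{2n} → 1`. -/
theorem central_binom_asymptotics :
    Tendsto (fun n : ℕ =>
        (((2 * n).choose n : ℕ) : ℝ) * Real.sqrt (π * n) / 2 ^ (2 * n))
      atTop (nhds 1) := by
  have hlim : Tendsto (fun n : ℕ => √π * stirlingSeq (2 * n) / stirlingSeq n ^ 2) atTop
      (𝓝 (√π * √π / √π ^ 2)) :=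
    (tendsto_const_nhds.mul (tendsto_stirlingSeq_sqrt_pi.comp
      (tendsto_id.const_mul_atTop' two_pos))).div (tendsto_stirlingSeq_sqrt_pi.pow 2)
      (by positivity)
  rw [← sq, div_self (by positivity)] at hlim
  refine hlim.congr' ?_
  filter_upwards [eventually_ne_atTop 0] with n hn
  exact (Nat.choose_two_mul_self_mul_sqrt_div_eq_stirlingSeq hn).symm
end

section
/- Wallis's table of integrals: for all positive natural numbers p and q, the integral of (1 - x^{1/q})^p over the interval [0,1] equals p!·q!/(p+q)! = 1/binom(p+q, q). -/
/-!
The substitution `x = u ^ q` turns the integral into `q B(q - 1, p)`, where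
`B(m, n) = ∫₀¹ x ^ m (1 - x) ^ n`. Integrating the derivative of `x ^ (m + 1) (1 - x) ^ (n + 1)`
over `[0, 1]` gives `(m + 1) B(m, n + 1) = (n + 1) B(m + 1, n)`, and induction on `n` yields
`B(m, n) = m! n! / (m + n + 1)!`.
-/

open intervalIntegral Nat

theorem integral_comp_rpow_one_div_natCast {E : Type*} [NormedAddCommGroup E] [NormedSpace ℝ E]
    (h : ℝ → E) {q : ℕ} (hq : q ≠ 0) :
    ∫ x in (0 : ℝ)..1, h (x ^ (1 / (q : ℝ))) = (q : ℝ) • ∫ u in (0 : ℝ)..1, u ^ (q - 1) • h u := by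
  have hsubst := integral_deriv_smul_comp_of_deriv_nonneg (a := 0) (b := 1)
    (f := fun u : ℝ ↦ u ^ q) (f' := fun u ↦ q * u ^ (q - 1)) (g := fun x ↦ h (x ^ (1 / (q : ℝ))))
    (by fun_prop) (fun u _ ↦ hasDerivAt_pow q u) (fun u hu ↦ by
      rw [min_eq_left zero_le_one] at hu
      exact mul_nonneg q.cast_nonneg (pow_nonneg hu.1.le _))
  simp only [zero_pow hq, one_pow] at hsubst
  rw [← hsubst, ← integral_smul]
  refine integral_congr fun u hu ↦ ?_
  have hu0 : 0 ≤ u := by rw [Set.uIcc_of_le zero_le_one] at hu; exact hu.1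
  simp only [Function.comp_apply, one_div, Real.pow_rpow_inv_natCast hu0 hq, mul_smul]

theorem integral_pow_mul_one_sub_pow_recurrence (m n : ℕ) :
    (m + 1 : ℝ) * ∫ x in (0 : ℝ)..1, x ^ m * (1 - x) ^ (n + 1) =
      (n + 1 : ℝ) * ∫ x in (0 : ℝ)..1, x ^ (m + 1) * (1 - x) ^ n := by
  have hderiv (x : ℝ) : HasDerivAt (fun x ↦ x ^ (m + 1) * (1 - x) ^ (n + 1))
      ((m + 1 : ℝ) * (x ^ m * (1 - x) ^ (n + 1)) - (n + 1 : ℝ) * (x ^ (m + 1) * (1 - x) ^ n)) x := by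
    refine ((hasDerivAt_pow (m + 1) x).fun_mul
      (((hasDerivAt_id' x).const_sub 1).fun_pow (n + 1))).congr_deriv ?_
    simp only [Nat.add_sub_cancel]
    push_cast
    ring
  have hFTC := integral_eq_sub_of_hasDerivAt (a := 0) (b := 1) (fun x _ ↦ hderiv x)
    (by apply Continuous.intervalIntegrable; fun_prop)
  rw [integral_sub (by apply Continuous.intervalIntegrable; fun_prop)
    (by apply Continuous.intervalIntegrable; fun_prop), integral_const_mul, integral_const_mul] at hFTC
  simp only [one_pow, sub_self, zero_pow (succ_ne_zero _), mul_zero, mul_one, sub_zero] at hFTC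
  linarith

theorem integral_pow_mul_one_sub_pow (m n : ℕ) :
    ∫ x in (0 : ℝ)..1, x ^ m * (1 - x) ^ n = (m ! * n ! : ℝ) / (m + n + 1)! := by
  induction n generalizing m with
  | zero =>
    simp only [pow_zero, mul_one, integral_pow, one_pow, zero_pow (succ_ne_zero m), sub_zero,
      factorial_zero, add_zero, factorial_succ]
    push_cast
    field_simp
  | succ n ih =>
    have hrec := integral_pow_mul_one_sub_pow_recurrence m n
    rw [ih, factorial_succ m] at hrec
    rw [show m + (n + 1) + 1 = m + 1 + n + 1 by ring, factorial_succ n]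
    apply mul_left_cancel₀ (by positivity : (m + 1 : ℝ) ≠ 0)
    rw [hrec]
    push_cast
    ring

theorem wallis_table_integral_general (p q : ℕ) (hq : 1 ≤ q) :
    (∫ x in (0:ℝ)..1, (1 - x ^ ((1 : ℝ) / (q : ℝ))) ^ p) =
        ((p.factorial : ℝ) * (q.factorial : ℝ)) / ((p + q).factorial : ℝ) ∧
      ((p.factorial : ℝ) * (q.factorial : ℝ)) / ((p + q).factorial : ℝ) =
        1 / (((p + q).choose q : ℕ) : ℝ) := by
  have hq0 : q ≠ 0 := by omega
  constructor
  · rw [integral_comp_rpow_one_div_natCast (fun u ↦ (1 - u) ^ p) hq0]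
    simp only [smul_eq_mul, integral_pow_mul_one_sub_pow,
      show q - 1 + p + 1 = p + q by omega, ← Nat.mul_factorial_pred hq0]
    push_cast
    ring
  · rw [← choose_symm_add, cast_add_choose, one_div_div]

/-- Wallis's table of integrals: for positive naturals `p, q`,
`∫_0^1 (1 - x^{1/q})^p dx = p! q! / (p+q)! = 1 / binom(p+q, q)`. -/
theorem wallis_table_integral (p q : ℕ) (hp : 1 ≤ p) (hq : 1 ≤ q) :
    (∫ x in (0:ℝ)..1, (1 - x ^ ((1 : ℝ) / (q : ℝ))) ^ p) =
        ((p.factorial : ℝ) * (q.factorial : ℝ)) / ((p + q).factorial : ℝ) ∧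
      ((p.factorial : ℝ) * (q.factorial : ℝ)) / ((p + q).factorial : ℝ) =
        1 / (((p + q).choose q : ℕ) : ℝ) :=
  wallis_table_integral_general p q hq
end
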